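/- arXiv:0907.2194 — 2 statements merged into one kernel-verified Lean document; each statement's English description precedes it below -/
import Mathlib

section
/- Let ψ^R_{A,B} : A ⊗ E B ⟶ E(A ⊗ B) be defined as ψ^R_{A,B} := E(c_{B,A}) ∘ ψ^L_{B,A} ∘ c_{A,EB}. Then the equation (ψ^Lψ^R a) holds: for all objects A, B, C of C, E(a_{A,B,C}) ∘ ψ^L_{A⊗B,C} ∘ (ψ^R_{A,B} ⊗ 1_C) = ψ^R_{A,B⊗C} ∘ (1_A ⊗ ψ^L_{B,C}) ∘ a_{A,EB,C}. -/
open CategoryTheory MonoidalCategory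

/-! Substituting the definition of `ψR`, naturality of `ψL` and its associativity axiom bring both
sides to the form `P ≫ ψL B (A ⊗ C') ≫ E.map Q`, with `P` and `Q` built from associators and
braidings. The two `P`s agree by the forward hexagon, the two `Q`s by the reverse hexagon and the
symmetry of the braiding. -/

namespace CategoryTheory.BraidedCategory

variable {C : Type*} [Category C] [MonoidalCategory C] [BraidedCategory C]

theorem hexagon_forward_comp_whiskerLeft_inv (X Y Z : C) :
    (α_ X Y Z).hom ≫ (β_ X (Y ⊗ Z)).hom ≫ (α_ Y Z X).hom ≫ Y ◁ (β_ X Z).inv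
      = (β_ X Y).hom ▷ Z ≫ (α_ Y X Z).hom := by
  simp only [reassoc_of% hexagon_forward, ← whiskerLeft_comp, Iso.hom_inv_id, whiskerLeft_id,
    Category.comp_id]

theorem whiskerLeft_inv_comp_hexagon_reverse (X Y Z : C) :
    X ◁ (β_ Y Z).inv ≫ (α_ X Y Z).inv ≫ (β_ (X ⊗ Y) Z).hom
      = (α_ X Z Y).inv ≫ (β_ X Z).hom ▷ Y ≫ (α_ Z X Y).hom := by
  rw [← cancel_mono (α_ Z X Y).inv]
  simp only [Category.assoc, Iso.hom_inv_id, Category.comp_id, hexagon_reverse,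
    ← whiskerLeft_comp_assoc, Iso.inv_hom_id, whiskerLeft_id, Category.id_comp]

end CategoryTheory.BraidedCategory

section LeftStrength

variable {C : Type*} [Category C] [MonoidalCategory C] {E : C ⥤ C}
  {ψL : ∀ A B : C, E.obj A ⊗ B ⟶ E.obj (A ⊗ B)}

theorem whiskerLeft_comp_psiL
    (ψL_nat : ∀ {A A' B B' : C} (f : A ⟶ A') (g : B ⟶ B'),
      (E.map f ⊗ₘ g) ≫ ψL A' B' = ψL A B ≫ E.map (f ⊗ₘ g))
    (A : C) {B B' : C} (g : B ⟶ B') :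
    E.obj A ◁ g ≫ ψL A B' = ψL A B ≫ E.map (A ◁ g) := by
  simpa using ψL_nat (𝟙 A) g

theorem whiskerRight_map_comp_psiL
    (ψL_nat : ∀ {A A' B B' : C} (f : A ⟶ A') (g : B ⟶ B'),
      (E.map f ⊗ₘ g) ≫ ψL A' B' = ψL A B ≫ E.map (f ⊗ₘ g))
    {A A' : C} (f : A ⟶ A') (B : C) :
    E.map f ▷ B ≫ ψL A' B = ψL A B ≫ E.map (f ▷ B) := by
  simpa using ψL_nat f (𝟙 B)

theorem psiL_whiskerRight_comp_psiL
    (ψLa : ∀ A B C' : C,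
      (ψL A B ⊗ₘ 𝟙 C') ≫ ψL (A ⊗ B) C' ≫ E.map (α_ A B C').hom
        = (α_ (E.obj A) B C').hom ≫ ψL A (B ⊗ C'))
    (A B C' : C) :
    ψL A B ▷ C' ≫ ψL (A ⊗ B) C'
      = (α_ (E.obj A) B C').hom ≫ ψL A (B ⊗ C') ≫ E.map (α_ A B C').inv := by
  rw [← Category.assoc, ← ψLa, ← tensorHom_id]
  simp [← E.map_comp]

end LeftStrength

theorem psiL_psiR_assoc_general {C : Type*} [Category C] [MonoidalCategory C] [SymmetricCategory C]
    (E : C ⥤ C)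
    (ψL : ∀ A B : C, E.obj A ⊗ B ⟶ E.obj (A ⊗ B))
    (ψL_nat : ∀ {A A' B B' : C} (f : A ⟶ A') (g : B ⟶ B'),
      (E.map f ⊗ₘ g) ≫ ψL A' B' = ψL A B ≫ E.map (f ⊗ₘ g))
    (ψLa : ∀ A B C' : C,
      (ψL A B ⊗ₘ 𝟙 C') ≫ ψL (A ⊗ B) C' ≫ E.map (α_ A B C').hom
        = (α_ (E.obj A) B C').hom ≫ ψL A (B ⊗ C'))
    (ψR : ∀ A B : C, A ⊗ E.obj B ⟶ E.obj (A ⊗ B))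
    (hψR : ∀ A B : C,
      ψR A B = (β_ A (E.obj B)).hom ≫ ψL B A ≫ E.map (β_ B A).hom) :
    ∀ A B C' : C,
      (ψR A B ⊗ₘ 𝟙 C') ≫ ψL (A ⊗ B) C' ≫ E.map (α_ A B C').hom
        = (α_ A (E.obj B) C').hom ≫ (𝟙 A ⊗ₘ ψL B C') ≫ ψR A (B ⊗ C') := by
  intro A B C'
  have swap : ψL B (C' ⊗ A)
      = E.obj B ◁ (β_ A C').inv ≫ ψL B (A ⊗ C') ≫ E.map (B ◁ (β_ C' A).inv) := by
    rw [← SymmetricCategory.braiding_swap_eq_inv_braiding C' A, ← whiskerLeft_comp_psiL ψL_nat]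
    simp
  calc (ψR A B ⊗ₘ 𝟙 C') ≫ ψL (A ⊗ B) C' ≫ E.map (α_ A B C').hom
      = (β_ A (E.obj B)).hom ▷ C' ≫ (α_ (E.obj B) A C').hom ≫ ψL B (A ⊗ C') ≫
          E.map ((α_ B A C').inv ≫ (β_ B A).hom ▷ C' ≫ (α_ A B C').hom) := by
        rw [hψR]
        simp only [tensorHom_id, comp_whiskerRight, Category.assoc, E.map_comp,
          reassoc_of% (whiskerRight_map_comp_psiL ψL_nat),
          reassoc_of% (psiL_whiskerRight_comp_psiL ψLa)]
    _ = (α_ A (E.obj B) C').hom ≫ (β_ A (E.obj B ⊗ C')).hom ≫ (α_ (E.obj B) C' A).hom ≫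
          E.obj B ◁ (β_ A C').inv ≫ ψL B (A ⊗ C') ≫
          E.map (B ◁ (β_ C' A).inv ≫ (α_ B C' A).inv ≫ (β_ (B ⊗ C') A).hom) := by
        rw [reassoc_of% BraidedCategory.hexagon_forward_comp_whiskerLeft_inv,
          BraidedCategory.whiskerLeft_inv_comp_hexagon_reverse]
    _ = (α_ A (E.obj B) C').hom ≫ (𝟙 A ⊗ₘ ψL B C') ≫ ψR A (B ⊗ C') := by
        rw [hψR]
        simp only [id_tensorHom, BraidedCategory.braiding_naturality_right_assoc,
          reassoc_of% (psiL_whiskerRight_comp_psiL ψLa), swap, Category.assoc, E.map_comp]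

/-- For a left monoidal endofunctor `E` of a symmetric monoidal category `C`,
with `ψ^R_{A,B} := E(c_{B,A}) ∘ ψ^L_{B,A} ∘ c_{A,EB}`, the equation (ψ^Lψ^R a) holds:
`E(a_{A,B,C}) ∘ ψ^L_{A⊗B,C} ∘ (ψ^R_{A,B} ⊗ 1_C)
  = ψ^R_{A,B⊗C} ∘ (1_A ⊗ ψ^L_{B,C}) ∘ a_{A,EB,C}`. -/
theorem psiL_psiR_assoc {C : Type*} [Category C] [MonoidalCategory C] [SymmetricCategory C]
    (E : C ⥤ C)
    (ψL : ∀ A B : C, E.obj A ⊗ B ⟶ E.obj (A ⊗ B))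
    (ψL_nat : ∀ {A A' B B' : C} (f : A ⟶ A') (g : B ⟶ B'),
      (E.map f ⊗ₘ g) ≫ ψL A' B' = ψL A B ≫ E.map (f ⊗ₘ g))
    (ψLa : ∀ A B C' : C,
      (ψL A B ⊗ₘ 𝟙 C') ≫ ψL (A ⊗ B) C' ≫ E.map (α_ A B C').hom
        = (α_ (E.obj A) B C').hom ≫ ψL A (B ⊗ C'))
    (ψLr : ∀ A : C, ψL A (𝟙_ C) ≫ E.map (ρ_ A).hom = (ρ_ (E.obj A)).hom)
    (ψR : ∀ A B : C, A ⊗ E.obj B ⟶ E.obj (A ⊗ B))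
    (hψR : ∀ A B : C,
      ψR A B = (β_ A (E.obj B)).hom ≫ ψL B A ≫ E.map (β_ B A).hom) :
    ∀ A B C' : C,
      (ψR A B ⊗ₘ 𝟙 C') ≫ ψL (A ⊗ B) C' ≫ E.map (α_ A B C').hom
        = (α_ A (E.obj B) C').hom ≫ (𝟙 A ⊗ₘ ψL B C') ≫ ψR A (B ⊗ C') :=
  psiL_psiR_assoc_general E ψL ψL_nat ψLa ψR hψR
end

section
/- The equation (Ψc3) holds: for all objects A₁, A₂, B₁, B₂ of C, the composite (Ψ_{A₁,A₂;B₁} ⊗ 1_{B₂}) ∘ (1_{EA₁⊗B₁} ⊗ c_{B₂,EA₂}) equals Ψ_{A₁,A₂;B₁⊗B₂}, where on each side the unique structural coherence isomorphisms of C (built from a, l, r and their inverses) are inserted between the displayed factors so that the composites are well-typed morphisms with common source a bracketing of EA₁ ⊗ B₁ ⊗ B₂ ⊗ EA₂ and common target E(A₁⊗A₂) ⊗ (B₁⊗B₂) (in Lean this can be expressed with monoidal coherent composition ⊗≫). -/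
open CategoryTheory MonoidalCategory

/-!
This is the hexagon axiom: braiding `B₂` and then `B₁` past `E A₂` is braiding `B₁ ⊗ B₂` past
`E A₂` in one go, and `ψ` acts only after both braidings.
-/

namespace CategoryTheory.MonoidalCategory

variable {C : Type*} [Category C] [MonoidalCategory C] [BraidedCategory C]

/-- The paper's `Ψ_{A₁,A₂;B}` is `braidThen ψ_{A₁,A₂} B`. -/
def braidThen {X Y Z : C} (f : X ⊗ Y ⟶ Z) (B : C) : (X ⊗ B) ⊗ Y ⟶ Z ⊗ B :=
  (α_ X B Y).hom ≫ X ◁ (β_ B Y).hom ≫ (α_ X Y B).inv ≫ f ▷ B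

theorem braidThen_tensor {X Y Z : C} (f : X ⊗ Y ⟶ Z) (B₁ B₂ : C) :
    𝟙 (X ⊗ (B₁ ⊗ (B₂ ⊗ Y))) ⊗≫ (X ⊗ B₁) ◁ (β_ B₂ Y).hom ⊗≫ braidThen f B₁ ▷ B₂ ⊗≫
        𝟙 (Z ⊗ (B₁ ⊗ B₂))
      = 𝟙 (X ⊗ (B₁ ⊗ (B₂ ⊗ Y))) ⊗≫ braidThen f (B₁ ⊗ B₂) ⊗≫ 𝟙 (Z ⊗ (B₁ ⊗ B₂)) := by
  simp [braidThen, BraidedCategory.braiding_tensor_left_hom, monoidalComp]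

end CategoryTheory.MonoidalCategory

theorem Psic3_general {C : Type*} [Category C] [MonoidalCategory C] [SymmetricCategory C]
    (E : C ⥤ C)
    (ψ : ∀ A B : C, E.obj A ⊗ E.obj B ⟶ E.obj (A ⊗ B))
    (Ψ : ∀ A₁ A₂ B : C, (E.obj A₁ ⊗ B) ⊗ E.obj A₂ ⟶ E.obj (A₁ ⊗ A₂) ⊗ B)
    (hΨ : ∀ A₁ A₂ B : C,
      Ψ A₁ A₂ B = (α_ (E.obj A₁) B (E.obj A₂)).hom ≫
        (𝟙 (E.obj A₁) ⊗ₘ (β_ B (E.obj A₂)).hom) ≫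
        (α_ (E.obj A₁) (E.obj A₂) B).inv ≫ (ψ A₁ A₂ ⊗ₘ 𝟙 B)) :
    ∀ A₁ A₂ B₁ B₂ : C,
      (𝟙 (E.obj A₁ ⊗ (B₁ ⊗ (B₂ ⊗ E.obj A₂))) ⊗≫
        (𝟙 (E.obj A₁ ⊗ B₁) ⊗ₘ (β_ B₂ (E.obj A₂)).hom) ⊗≫
        (Ψ A₁ A₂ B₁ ⊗ₘ 𝟙 B₂) ⊗≫
        𝟙 (E.obj (A₁ ⊗ A₂) ⊗ (B₁ ⊗ B₂)))
      = (𝟙 (E.obj A₁ ⊗ (B₁ ⊗ (B₂ ⊗ E.obj A₂))) ⊗≫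
        Ψ A₁ A₂ (B₁ ⊗ B₂) ⊗≫
        𝟙 (E.obj (A₁ ⊗ A₂) ⊗ (B₁ ⊗ B₂))) := by
  intro A₁ A₂ B₁ B₂
  have hΨ_eq : ∀ B, Ψ A₁ A₂ B = braidThen (ψ A₁ A₂) B := fun B => by
    simp only [hΨ, braidThen, id_tensorHom, tensorHom_id]
  simpa only [hΨ_eq, id_tensorHom, tensorHom_id] using braidThen_tensor (ψ A₁ A₂) B₁ B₂

set_option maxHeartbeats 1000000 in
/-- For a linear (symmetric lax monoidal) endofunctor `E` of a symmetric monoidal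
category, with `Ψ_{A₁,A₂;B} := (ψ_{A₁,A₂} ⊗ 1_B) ∘ a⁻¹ ∘ (1_{EA₁} ⊗ c_{B,EA₂}) ∘ a`,
the equation (Ψc3) holds (structural coherence isomorphisms inserted via `⊗≫`). -/
theorem Psic3 {C : Type*} [Category C] [MonoidalCategory C] [SymmetricCategory C]
    (E : C ⥤ C)
    (ψ : ∀ A B : C, E.obj A ⊗ E.obj B ⟶ E.obj (A ⊗ B))
    (ψ₀ : 𝟙_ C ⟶ E.obj (𝟙_ C))
    (ψ_nat : ∀ {A A' B B' : C} (f : A ⟶ A') (g : B ⟶ B'),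
      (E.map f ⊗ₘ E.map g) ≫ ψ A' B' = ψ A B ≫ E.map (f ⊗ₘ g))
    (ψa : ∀ A B C' : C,
      (ψ A B ⊗ₘ 𝟙 (E.obj C')) ≫ ψ (A ⊗ B) C' ≫ E.map (α_ A B C').hom
        = (α_ (E.obj A) (E.obj B) (E.obj C')).hom ≫ (𝟙 (E.obj A) ⊗ₘ ψ B C') ≫ ψ A (B ⊗ C'))
    (ψl : ∀ A : C,
      (ψ₀ ⊗ₘ 𝟙 (E.obj A)) ≫ ψ (𝟙_ C) A ≫ E.map (λ_ A).hom = (λ_ (E.obj A)).hom)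
    (ψr : ∀ A : C,
      (𝟙 (E.obj A) ⊗ₘ ψ₀) ≫ ψ A (𝟙_ C) ≫ E.map (ρ_ A).hom = (ρ_ (E.obj A)).hom)
    (ψc : ∀ A B : C,
      ψ A B ≫ E.map (β_ A B).hom = (β_ (E.obj A) (E.obj B)).hom ≫ ψ B A)
    (Ψ : ∀ A₁ A₂ B : C, (E.obj A₁ ⊗ B) ⊗ E.obj A₂ ⟶ E.obj (A₁ ⊗ A₂) ⊗ B)
    (hΨ : ∀ A₁ A₂ B : C,
      Ψ A₁ A₂ B = (α_ (E.obj A₁) B (E.obj A₂)).hom ≫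
        (𝟙 (E.obj A₁) ⊗ₘ (β_ B (E.obj A₂)).hom) ≫
        (α_ (E.obj A₁) (E.obj A₂) B).inv ≫ (ψ A₁ A₂ ⊗ₘ 𝟙 B)) :
    ∀ A₁ A₂ B₁ B₂ : C,
      (𝟙 (E.obj A₁ ⊗ (B₁ ⊗ (B₂ ⊗ E.obj A₂))) ⊗≫
        (𝟙 (E.obj A₁ ⊗ B₁) ⊗ₘ (β_ B₂ (E.obj A₂)).hom) ⊗≫
        (Ψ A₁ A₂ B₁ ⊗ₘ 𝟙 B₂) ⊗≫
        𝟙 (E.obj (A₁ ⊗ A₂) ⊗ (B₁ ⊗ B₂)))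
      = (𝟙 (E.obj A₁ ⊗ (B₁ ⊗ (B₂ ⊗ E.obj A₂))) ⊗≫
        Ψ A₁ A₂ (B₁ ⊗ B₂) ⊗≫
        𝟙 (E.obj (A₁ ⊗ A₂) ⊗ (B₁ ⊗ B₂))) :=
  Psic3_general E ψ Ψ hΨ
end
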